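/- Let a < b be real numbers and let z be a real number with z > b or z < a. Then (1/π) · ∫_a^b (1/(z−t)) · √((b−t)/(t−a)) dt = 1 − √((z−b)/(z−a)), where all square roots are of positive real numbers. -/

import Mathlib

/-!
With `s(t) = √((b - t) / (t - a))` and `r = √((z - b) / (z - a))`, the function
`2 r arctan (s / r) - 2 arctan s` is a primitive of the integrand on `(a, b)`. As `t` runs from
`a` to `b`, `s` decreases from `∞` to `0`, so the integral equals `π - r π`.
-/

open MeasureTheory intervalIntegral Set Filter Topology

noncomputable def sqrtRatio (a b t : ℝ) : ℝ := √((b - t) / (t - a))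

section sqrtRatio

variable {a b t : ℝ}

lemma sq_sqrtRatio (hta : a < t) (htb : t ≤ b) : sqrtRatio a b t ^ 2 = (b - t) / (t - a) :=
  Real.sq_sqrt (div_nonneg (by linarith) (by linarith))

lemma sqrtRatio_pos (hta : a < t) (htb : t < b) : 0 < sqrtRatio a b t :=
  Real.sqrt_pos.mpr (div_pos (by linarith) (by linarith))

lemma hasDerivAt_sqrtRatio (hta : a < t) (htb : t < b) :
    HasDerivAt (sqrtRatio a b) ((a - b) / (2 * sqrtRatio a b t * (t - a) ^ 2)) t := by
  have hquot : HasDerivAt (fun u => (b - u) / (u - a)) ((a - b) / (t - a) ^ 2) t :=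
    (((hasDerivAt_id t).const_sub b).div ((hasDerivAt_id t).sub_const a)
      (by linarith : t - a ≠ 0)).congr_deriv (by simp only [id]; ring)
  exact (hquot.sqrt (div_pos (by linarith) (by linarith)).ne').congr_deriv
    (by rw [sqrtRatio, div_div, mul_comm])

lemma tendsto_sqrtRatio_nhdsLT (hab : a < b) : Tendsto (sqrtRatio a b) (𝓝[<] b) (𝓝 0) := by
  have hcont : ContinuousAt (sqrtRatio a b) b :=
    ((continuousAt_const.sub continuousAt_id).div (continuousAt_id.sub continuousAt_const)
      (sub_ne_zero.mpr hab.ne')).sqrt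
  simpa [sqrtRatio] using hcont.tendsto.mono_left nhdsWithin_le_nhds

lemma tendsto_sqrtRatio_nhdsGT (hab : a < b) : Tendsto (sqrtRatio a b) (𝓝[>] a) atTop := by
  have hsub : Tendsto (fun t => t - a) (𝓝[>] a) (𝓝[>] 0) :=
    tendsto_nhdsWithin_iff.mpr
      ⟨((continuous_sub_right a).tendsto' a 0 (sub_self a)).mono_left nhdsWithin_le_nhds,
        eventually_nhdsWithin_of_forall fun _ ht => sub_pos.mpr (mem_Ioi.mp ht)⟩
  have hnum : Tendsto (fun t => b - t) (𝓝[>] a) (𝓝 (b - a)) :=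
    (continuous_const.sub continuous_id).continuousWithinAt.tendsto
  exact Real.tendsto_sqrt_atTop.comp
    (hnum.pos_mul_atTop (by linarith) hsub.inv_tendsto_nhdsGT_zero)

lemma intervalIntegrable_sqrtRatio (hab : a ≤ b) :
    IntervalIntegrable (sqrtRatio a b) volume a b := by
  have hrpow : IntervalIntegrable (fun t => (t - a) ^ (-(1 / 2) : ℝ)) volume a b := by
    simpa using (intervalIntegrable_rpow' (by norm_num : (-1 : ℝ) < -(1 / 2))).comp_sub_right a
      (a := a - a) (b := b - a)
  refine (hrpow.continuousOn_mul (g := fun t => √(b - t)) (by fun_prop)).congr_uIoo ?_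
  intro t ht
  rw [uIoo_of_le hab] at ht
  change √(b - t) * (t - a) ^ (-(1 / 2) : ℝ) = √((b - t) / (t - a))
  rw [Real.sqrt_div' _ (by linarith [ht.1]), Real.rpow_neg (by linarith [ht.1]),
    ← Real.sqrt_eq_rpow, div_eq_mul_inv]

end sqrtRatio

noncomputable def sqrtRatioPrimitive (a b r t : ℝ) : ℝ :=
  2 * r * Real.arctan (sqrtRatio a b t / r) - 2 * Real.arctan (sqrtRatio a b t)

lemma hasDerivAt_sqrtRatioPrimitive {a b r t z : ℝ} (hr : r ≠ 0)
    (hr2 : r ^ 2 = (z - b) / (z - a)) (hta : a < t) (htb : t < b) (hzt : z ≠ t) :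
    HasDerivAt (sqrtRatioPrimitive a b r) (1 / (z - t) * sqrtRatio a b t) t := by
  have hza : z - a ≠ 0 := fun h => by simp [h, hr] at hr2
  have hzb : z - b ≠ 0 := fun h => by simp [h, hr] at hr2
  have hD := (((Real.hasDerivAt_arctan _).comp t
    ((hasDerivAt_sqrtRatio hta htb).div_const r)).const_mul (2 * r)).sub
    (((Real.hasDerivAt_arctan _).comp t (hasDerivAt_sqrtRatio hta htb)).const_mul 2)
  refine hD.congr_deriv ?_
  have hs2 := sq_sqrtRatio hta htb.le
  set s := sqrtRatio a b t
  have hs : s ≠ 0 := (sqrtRatio_pos hta htb).ne'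
  have hta' : t - a ≠ 0 := by linarith
  have hzt' : z - t ≠ 0 := sub_ne_zero.mpr hzt
  have hba : b - a ≠ 0 := by linarith
  have h1 : 1 + s ^ 2 = (b - a) / (t - a) := by
    rw [hs2]; field_simp; ring
  have h2 : 1 + (s / r) ^ 2 = (b - a) * (z - t) / ((z - b) * (t - a)) := by
    rw [div_pow, hs2, hr2]; field_simp; ring
  rw [h1, h2]
  field_simp
  rw [eq_div_iff hta'] at hs2
  linear_combination (a - b) * hs2

lemma tendsto_sqrtRatioPrimitive_nhdsLT {a b : ℝ} (r : ℝ) (hab : a < b) :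
    Tendsto (sqrtRatioPrimitive a b r) (𝓝[<] b) (𝓝 0) := by
  have hs := tendsto_sqrtRatio_nhdsLT hab
  have h : Tendsto (sqrtRatioPrimitive a b r) (𝓝[<] b)
      (𝓝 (2 * r * Real.arctan (0 / r) - 2 * Real.arctan 0)) :=
    (((Real.continuous_arctan.tendsto _).comp (hs.div_const r)).const_mul (2 * r)).sub
      (((Real.continuous_arctan.tendsto _).comp hs).const_mul 2)
  simpa using h

lemma tendsto_sqrtRatioPrimitive_nhdsGT {a b r : ℝ} (hab : a < b) (hr : 0 < r) :
    Tendsto (sqrtRatioPrimitive a b r) (𝓝[>] a) (𝓝 ((r - 1) * Real.pi)) := by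
  have harctan : Tendsto Real.arctan atTop (𝓝 (Real.pi / 2)) :=
    Real.tendsto_arctan_atTop.mono_right nhdsWithin_le_nhds
  have hs := tendsto_sqrtRatio_nhdsGT hab
  rw [show (r - 1) * Real.pi = 2 * r * (Real.pi / 2) - 2 * (Real.pi / 2) by ring]
  exact ((harctan.comp (hs.atTop_div_const hr)).const_mul (2 * r)).sub
    ((harctan.comp hs).const_mul 2)

theorem integral_inv_mul_sqrt_ratio' (a b z : ℝ) (hab : a < b) (hz : z > b ∨ z < a) :
    (1 / Real.pi) * (∫ t in a..b, (1 / (z - t)) * Real.sqrt ((b - t) / (t - a))) =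
      1 - Real.sqrt ((z - b) / (z - a)) := by
  have hz' : z ∉ Icc a b := by rintro ⟨h₁, h₂⟩; rcases hz with h | h <;> linarith
  have hratio : 0 < (z - b) / (z - a) := by
    rcases hz with h | h
    · exact div_pos (by linarith) (by linarith)
    · exact div_pos_of_neg_of_neg (by linarith) (by linarith)
  set r := √((z - b) / (z - a))
  have hr : 0 < r := Real.sqrt_pos.mpr hratio
  have hint : IntervalIntegrable (fun t => 1 / (z - t) * sqrtRatio a b t) volume a b := by
    refine (intervalIntegrable_sqrtRatio hab.le).continuousOn_mul ?_
    rw [uIcc_of_le hab.le]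
    exact continuousOn_const.div (continuousOn_const.sub continuousOn_id)
      fun t ht h => hz' (sub_eq_zero.mp h ▸ ht)
  have hFTC := integral_eq_sub_of_hasDerivAt_of_tendsto hab
    (fun t ht => hasDerivAt_sqrtRatioPrimitive hr.ne' (Real.sq_sqrt hratio.le) ht.1 ht.2
      fun h => hz' (h ▸ Ioo_subset_Icc_self ht))
    hint (tendsto_sqrtRatioPrimitive_nhdsGT hab hr) (tendsto_sqrtRatioPrimitive_nhdsLT r hab)
  simp only [sqrtRatio] at hFTC
  rw [hFTC]
  field_simp
  ring
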